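/- arXiv:1010.1473 — 2 statements merged into one kernel-verified Lean document; each statement's English description precedes it below -/
import Mathlib

section
/- Let u, v be monomials of degree d with x_1 | u, x_1 | v, ν_1(v) = b > 0, and let I = (L(u,v)). Set u' = u/x_1^b, v' = v/x_1^b and I' = (L(u', v')). Then Ass(S/I) = {(x_1)} ∪ Ass(S/I'). -/
/-!
Every monomial m with v ≤_lex m has ν_1(m) ≥ ν_1(v) = b, so L(u,v) = x_1^b · L(u',v') and
I = x_1^b I'. Moreover v' ∈ I' is not divisible by x_1, so I' ⊄ (x_1).

For a prime element x of a Noetherian domain R, b > 0 and an ideal J ⊄ (x), the exact sequence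
0 → R/J → R/x^b J → R/(x^b) → 0 (the first map is multiplication by x^b) gives
Ass(R/J) ⊆ Ass(R/x^b J) ⊆ Ass(R/J) ∪ Ass(R/(x^b)) = Ass(R/J) ∪ {(x)}, as (x^b) is (x)-primary;
and (x) is the annihilator of the class of x^(b-1) g for any g ∈ J \ (x).
-/

open MvPolynomial

noncomputable section

namespace LexPaper

/-- total degree of an exponent vector -/
def deg {sigma : Type*} (a : sigma  →₀  ℕ) : ℕ := a.sum fun _ e => e

/-- the monomial x^a as an element of the polynomial ring -/
def mon (k : Type*) [Field k] {sigma : Type*} (a : sigma  →₀  ℕ) : MvPolynomial sigma k :=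
  MvPolynomial.monomial a 1

/-- `lexLe a b` : a ≤_lex b, where x_1 > x_2 > ... > x_n (index 0 is the largest variable). -/
def lexLe {n : ℕ} (a b : Fin n  →₀  ℕ) : Prop := toLex a ≤ toLex b

/-- `lexLt a b` : a <_lex b. -/
def lexLt {n : ℕ} (a b : Fin n  →₀  ℕ) : Prop := toLex a < toLex b

/-- the lexsegment set L(u,v) : all exponent vectors of degree d between v and u in lex order -/
def lexSeg {n : ℕ} (d : ℕ) (u v : Fin n  →₀  ℕ) : Set (Fin n  →₀  ℕ) :=
  {m | deg m = d  ∧  lexLe v m  ∧  lexLe m u}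

/-- the lexsegment ideal (L(u,v)) -/
def lexIdeal (k : Type*) [Field k] {n : ℕ} (d : ℕ) (u v : Fin n  →₀  ℕ) :
    Ideal (MvPolynomial (Fin n) k) :=
  Ideal.span (mon k '' lexSeg d u v)

/-- the maximal graded ideal (x_1, ..., x_n) -/
def mMax (k : Type*) [Field k] (n : ℕ) : Ideal (MvPolynomial (Fin n) k) :=
  Ideal.span (Set.range (X : Fin n -> MvPolynomial (Fin n) k))

/-- depth of S/I: the supremum of lengths of regular sequences on S/I consisting of
elements of the maximal graded ideal -/
def quotDepth (k : Type*) [Field k] {n : ℕ} (I : Ideal (MvPolynomial (Fin n) k)) : ℕ :=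
  sSup {r : ℕ | ∃ rs : List (MvPolynomial (Fin n) k), rs.length = r  ∧ 
    (∀ x ∈ rs, x ∈ mMax k n)  ∧  RingTheory.Sequence.IsRegular (MvPolynomial (Fin n) k ⧸ I) rs}

end LexPaper

section AssociatedPrimes

variable {R : Type*} [CommRing R]

lemma Ideal.mem_colon_singleton_mk_iff {K : Ideal R} (r w : R) :
    r ∈ (⊥ : Submodule R (R ⧸ K)).colon {Ideal.Quotient.mk K w} ↔ r * w ∈ K := by
  rw [Submodule.mem_colon_singleton, Submodule.mem_bot, Algebra.smul_def,
    Ideal.Quotient.algebraMap_eq, ← map_mul, Ideal.Quotient.eq_zero_iff_mem]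

def Ideal.mulQuotient (f : R) (J : Ideal R) : R ⧸ J →ₗ[R] R ⧸ Ideal.span {f} * J :=
  Submodule.mapQ _ _ (LinearMap.mulLeft R f) fun _ ha =>
    Ideal.mul_mem_mul (Ideal.mem_span_singleton_self f) ha

@[simp]
lemma Ideal.mulQuotient_mk (f : R) (J : Ideal R) (a : R) :
    Ideal.mulQuotient f J (Submodule.Quotient.mk a) = Submodule.Quotient.mk (f * a) :=
  rfl

lemma Ideal.exact_mulQuotient_factor (f : R) (J : Ideal R) :
    Function.Exact (Ideal.mulQuotient f J)
      (Submodule.factor (Ideal.mul_le_left : Ideal.span {f} * J ≤ Ideal.span {f})) := by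
  refine LinearMap.exact_of_comp_of_mem_range ?_ fun y hy => ?_
  · refine LinearMap.ext fun y => ?_
    obtain ⟨a, rfl⟩ := Submodule.mkQ_surjective _ y
    exact (Submodule.Quotient.mk_eq_zero _).2
      (Ideal.mul_mem_right a _ (Ideal.mem_span_singleton_self f))
  · obtain ⟨r, rfl⟩ := Submodule.mkQ_surjective _ y
    rw [Submodule.factor_mk, Submodule.mkQ_apply, Submodule.Quotient.mk_eq_zero,
      Ideal.mem_span_singleton'] at hy
    obtain ⟨s, rfl⟩ := hy
    exact ⟨Submodule.Quotient.mk s, by rw [Ideal.mulQuotient_mk, mul_comm f s]; rfl⟩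

variable {x : R} {b : ℕ}

lemma Prime.radical_span_singleton_pow (hx : Prime x) (hb : b ≠ 0) :
    (Ideal.span {x ^ b}).radical = Ideal.span {x} := by
  rw [← Ideal.span_singleton_pow, Ideal.radical_pow _ hb,
    ((Ideal.span_singleton_prime hx.ne_zero).2 hx).radical]

variable [IsDomain R]

lemma Ideal.mul_mem_span_singleton_mul_iff {f a : R} (hf : f ≠ 0) {J : Ideal R} :
    f * a ∈ Ideal.span {f} * J ↔ a ∈ J := by
  simp only [Ideal.mem_span_singleton_mul, mul_right_inj' hf, exists_eq_right]

lemma Ideal.mulQuotient_injective {f : R} (hf : f ≠ 0) (J : Ideal R) :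
    Function.Injective (Ideal.mulQuotient f J) := by
  refine (injective_iff_map_eq_zero _).2 fun y hy => ?_
  obtain ⟨a, rfl⟩ := Submodule.mkQ_surjective _ y
  rw [Submodule.mkQ_apply, Ideal.mulQuotient_mk, Submodule.Quotient.mk_eq_zero] at hy
  rw [Submodule.mkQ_apply, Submodule.Quotient.mk_eq_zero]
  exact (Ideal.mul_mem_span_singleton_mul_iff hf).1 hy

lemma Prime.isPrimary_span_singleton_pow (hx : Prime x) (hb : b ≠ 0) :
    (Ideal.span {x ^ b}).IsPrimary := by
  refine Ideal.isPrimary_iff.2 ⟨?_, fun {a c} hac => ?_⟩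
  · rw [Ne, Ideal.span_singleton_eq_top]
    exact fun hu => hx.not_isUnit (isUnit_of_dvd_unit (dvd_pow_self x hb) hu)
  · rw [hx.radical_span_singleton_pow hb, Ideal.mem_span_singleton, Ideal.mem_span_singleton]
    rw [Ideal.mem_span_singleton] at hac
    exact or_iff_not_imp_right.2 fun hxc => hx.pow_dvd_of_dvd_mul_right b hxc hac

variable [IsNoetherianRing R]

lemma Prime.associatedPrimes_quotient_span_pow (hx : Prime x) (hb : b ≠ 0) :
    associatedPrimes R (R ⧸ Ideal.span {x ^ b}) = {Ideal.span {x}} := by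
  rw [associatedPrimes.eq_singleton_of_isPrimary (hx.isPrimary_span_singleton_pow hb),
    hx.radical_span_singleton_pow hb]

lemma Prime.span_singleton_mem_associatedPrimes_quotient_span_pow_mul (hx : Prime x)
    (hb : b ≠ 0) {J : Ideal R} (hJ : ¬ J ≤ Ideal.span {x}) :
    Ideal.span {x} ∈ associatedPrimes R (R ⧸ Ideal.span {x ^ b} * J) := by
  obtain ⟨g, hgJ, hxg⟩ := Set.not_subset.1 hJ
  rw [SetLike.mem_coe, Ideal.mem_span_singleton] at hxg
  refine isAssociatedPrime_iff.2 ⟨(Ideal.span_singleton_prime hx.ne_zero).2 hx,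
    Ideal.Quotient.mk _ (x ^ (b - 1) * g), Ideal.ext fun c => ?_⟩
  rw [Ideal.mem_colon_singleton_mk_iff, Ideal.mem_span_singleton]
  constructor
  · rintro ⟨t, rfl⟩
    have : x * t * (x ^ (b - 1) * g) = t * (x ^ b * g) := by
      rw [← pow_sub_one_mul hb]; ring
    rw [this]
    exact Ideal.mul_mem_left _ t (Ideal.mul_mem_mul (Ideal.mem_span_singleton_self _) hgJ)
  · intro hc
    have hdvd : x ^ (b - 1) * x ∣ x ^ (b - 1) * (c * g) := by
      rw [pow_sub_one_mul hb, ← Ideal.mem_span_singleton, mul_left_comm]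
      exact Ideal.mul_le_left hc
    have hxcg : x ∣ c * g := (mul_dvd_mul_iff_left (pow_ne_zero (b - 1) hx.ne_zero)).1 hdvd
    exact (hx.dvd_or_dvd hxcg).resolve_right hxg

theorem Prime.associatedPrimes_quotient_span_pow_mul (hx : Prime x) (hb : b ≠ 0)
    {J : Ideal R} (hJ : ¬ J ≤ Ideal.span {x}) :
    associatedPrimes R (R ⧸ Ideal.span {x ^ b} * J) =
      insert (Ideal.span {x}) (associatedPrimes R (R ⧸ J)) := by
  have hf : x ^ b ≠ 0 := pow_ne_zero b hx.ne_zero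
  refine subset_antisymm ?_ (Set.insert_subset
    (hx.span_singleton_mem_associatedPrimes_quotient_span_pow_mul hb hJ)
    (associatedPrimes.subset_of_injective (Ideal.mulQuotient_injective hf J)))
  calc associatedPrimes R (R ⧸ Ideal.span {x ^ b} * J)
      ⊆ associatedPrimes R (R ⧸ J) ∪ associatedPrimes R (R ⧸ Ideal.span {x ^ b}) :=
        associatedPrimes.subset_union_of_exact (Ideal.mulQuotient_injective hf J)
          (Ideal.exact_mulQuotient_factor _ J)
    _ = insert (Ideal.span {x}) (associatedPrimes R (R ⧸ J)) := by
        rw [hx.associatedPrimes_quotient_span_pow hb, Set.union_singleton]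

end AssociatedPrimes

namespace LexPaper

section LexSegment

variable {n : ℕ}

lemma deg_eq_degree {σ : Type*} (a : σ →₀ ℕ) : deg a = a.degree :=
  rfl

lemma lexLe_add_right_iff {a b s : Fin n →₀ ℕ} : lexLe (a + s) (b + s) ↔ lexLe a b := by
  rw [lexLe, lexLe, toLex_add, toLex_add, add_le_add_iff_right]

lemma lexLe_tsub_iff {a b s : Fin n →₀ ℕ} (ha : s ≤ a) (hb : s ≤ b) :
    lexLe (a - s) (b - s) ↔ lexLe a b := by
  rw [← lexLe_add_right_iff (s := s), tsub_add_cancel_of_le ha, tsub_add_cancel_of_le hb]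

lemma lexLe.apply_zero_le (hn : 0 < n) {a b : Fin n →₀ ℕ} (h : lexLe a b) :
    a ⟨0, hn⟩ ≤ b ⟨0, hn⟩ := by
  by_contra! hlt
  exact not_lt_of_ge h (Finsupp.Lex.lt_iff.2
    ⟨⟨0, hn⟩, fun j hj => absurd (Fin.lt_def.1 hj) (Nat.not_lt_zero _), hlt⟩)

lemma lexSeg_eq_image_add_single (hn : 0 < n) {d c : ℕ} {u v : Fin n →₀ ℕ} (hv : deg v = d)
    (huv : lexLe v u) (hc : c ≤ v ⟨0, hn⟩) :
    lexSeg d u v = (· + Finsupp.single ⟨0, hn⟩ c) ''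
      lexSeg (d - c) (u - Finsupp.single ⟨0, hn⟩ c) (v - Finsupp.single ⟨0, hn⟩ c) := by
  set s := Finsupp.single (⟨0, hn⟩ : Fin n) c
  have single_le : ∀ m, lexLe v m → s ≤ m := fun m h =>
    Finsupp.single_le_iff.2 (hc.trans (h.apply_zero_le hn))
  have hsv : s ≤ v := single_le v le_rfl
  have hsu : s ≤ u := single_le u huv
  have hcd : c ≤ d := hc.trans (hv ▸ Finsupp.le_degree _ v)
  ext m
  constructor
  · rintro ⟨hmd, hvm, hmu⟩
    have hsm : s ≤ m := single_le m hvm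
    refine ⟨m - s, ⟨?_, (lexLe_tsub_iff hsv hsm).2 hvm, (lexLe_tsub_iff hsm hsu).2 hmu⟩,
      tsub_add_cancel_of_le hsm⟩
    have hdeg := map_add Finsupp.degree (m - s) s
    rw [tsub_add_cancel_of_le hsm, Finsupp.degree_single, ← deg_eq_degree, hmd] at hdeg
    rw [deg_eq_degree]
    omega
  · rintro ⟨m, ⟨hmd, hvm, hmu⟩, rfl⟩
    refine ⟨?_, ?_, ?_⟩
    · rw [deg_eq_degree, map_add, Finsupp.degree_single, ← deg_eq_degree, hmd]
      omega
    · rw [← tsub_add_cancel_of_le hsv]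
      exact lexLe_add_right_iff.2 hvm
    · rw [← tsub_add_cancel_of_le hsu]
      exact lexLe_add_right_iff.2 hmu

variable {k : Type*} [Field k]

lemma lexIdeal_eq_span_X_pow_mul (hn : 0 < n) {d c : ℕ} {u v : Fin n →₀ ℕ} (hv : deg v = d)
    (huv : lexLe v u) (hc : c ≤ v ⟨0, hn⟩) :
    lexIdeal k d u v = Ideal.span {(X ⟨0, hn⟩ ^ c : MvPolynomial (Fin n) k)} *
      lexIdeal k (d - c) (u - Finsupp.single ⟨0, hn⟩ c) (v - Finsupp.single ⟨0, hn⟩ c) := by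
  rw [lexIdeal, lexIdeal, lexSeg_eq_image_add_single hn hv huv hc, Ideal.span_mul_span',
    Set.singleton_mul, ← Set.image_comp, ← Set.image_comp]
  congr 1
  refine Set.image_congr fun m _ => ?_
  simp only [Function.comp_apply, mon, X_pow_eq_monomial, monomial_mul, one_mul, add_comm]

lemma lexIdeal_not_le_span_X (hn : 0 < n) {d : ℕ} {u v : Fin n →₀ ℕ} (hv : deg v = d)
    (huv : lexLe v u) :
    ¬ lexIdeal k (d - v ⟨0, hn⟩) (u - Finsupp.single ⟨0, hn⟩ (v ⟨0, hn⟩))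
        (v - Finsupp.single ⟨0, hn⟩ (v ⟨0, hn⟩)) ≤ Ideal.span {X ⟨0, hn⟩} := by
  have hv_mem : v ∈ lexSeg d u v := ⟨hv, le_rfl, huv⟩
  rw [lexSeg_eq_image_add_single hn hv huv le_rfl] at hv_mem
  obtain ⟨m, hm, hmv⟩ := hv_mem
  have hm0 : m ⟨0, hn⟩ = 0 := by
    have := DFunLike.congr_fun hmv ⟨0, hn⟩
    simp only [Finsupp.add_apply, Finsupp.single_eq_same] at this
    omega
  intro hle
  have hX := Ideal.mem_span_singleton.1 (hle (Ideal.subset_span ⟨m, hm, rfl⟩))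
  rw [mon, X_dvd_monomial] at hX
  simp [hm0] at hX

end LexSegment

theorem statement9_general {k : Type*} [Field k] {n d : ℕ} (hn : 0 < n)
    (u v : Fin n →₀ ℕ) (hv : deg v = d) (huv : lexLe v u)
    (hb : 0 < v ⟨0, hn⟩) :
    associatedPrimes (MvPolynomial (Fin n) k) (MvPolynomial (Fin n) k ⧸ (lexIdeal k d u v)) =
      insert (Ideal.span {(X ⟨0, hn⟩ : MvPolynomial (Fin n) k)})
        (associatedPrimes (MvPolynomial (Fin n) k) (MvPolynomial (Fin n) k ⧸ (lexIdeal k (d - v ⟨0, hn⟩) (u - Finsupp.single ⟨0, hn⟩ (v ⟨0, hn⟩)) (v - Finsupp.single ⟨0, hn⟩ (v ⟨0, hn⟩))))) := by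
  rw [lexIdeal_eq_span_X_pow_mul hn hv huv le_rfl]
  exact X_prime.associatedPrimes_quotient_span_pow_mul hb.ne' (lexIdeal_not_le_span_X hn hv huv)

theorem statement9 {k : Type*} [Field k] {n d : ℕ} (hn : 0 < n) (hd : 2 ≤ d)
    (u v : Fin n →₀ ℕ) (hu : deg u = d) (hv : deg v = d) (huv : lexLe v u)
    (hx1u : 0 < u ⟨0, hn⟩) (hb : 0 < v ⟨0, hn⟩) :
    associatedPrimes (MvPolynomial (Fin n) k) (MvPolynomial (Fin n) k ⧸ (lexIdeal k d u v)) =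
      insert (Ideal.span {(X ⟨0, hn⟩ : MvPolynomial (Fin n) k)})
        (associatedPrimes (MvPolynomial (Fin n) k) (MvPolynomial (Fin n) k ⧸ (lexIdeal k (d - v ⟨0, hn⟩) (u - Finsupp.single ⟨0, hn⟩ (v ⟨0, hn⟩)) (v - Finsupp.single ⟨0, hn⟩ (v ⟨0, hn⟩))))) :=
  statement9_general hn u v hv huv hb

end LexPaper
end
end

section
/- Let d ≥ 3 and let I = (L(u,v)) be a lexsegment ideal with x_1 | u, ν_1(u) = 1, x_1 ∤ v, and v ≤_lex x_2·u/x_1. If x_2^{d-1}x_n ≥_lex v, then for every k ≥ 2, the monomial m = x_2^d·u^{k-1}/x_1 satisfies m ∉ I^k and x_i·m ∈ I^k for all 1 ≤ i ≤ n; hence depth(S/I^k) = 0. -/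
/-!
The monomial `m = x₂^d u^(t-1) / x₁` has degree `t d - 1`, while `I^t` is generated in degree
`t d`, so `m ∉ I^t`. Writing `u = x₁ w`, one has `x₁ m = x₂^d · u^(t-1)` and, for `i ≥ 2`,
`x_i m = (x₂^(d-1) x_i) · (x₂ w) · u^(t-2)`. Every factor lies in `L(u,v)`: none is divisible by
`x₁`, so each is `<_lex u`, while `x₂^(d-1) x_i ≥_lex x₂^(d-1) x_n ≥_lex v` and `x₂ w ≥_lex v`.
Thus `m` represents a nonzero socle element of `S/I^t`, which every element of the maximal ideal
annihilates; so no regular sequence in the maximal ideal is nonempty.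
-/

open MvPolynomial

noncomputable section

namespace LexPaper

open Finsupp (single)

section Degree

variable {σ : Type*}

theorem deg_add (a b : σ →₀ ℕ) : deg (a + b) = deg a + deg b := map_add Finsupp.degree a b

theorem deg_single (i : σ) (m : ℕ) : deg (single i m) = m := Finsupp.degree_single i m

theorem deg_nsmul (s : ℕ) (a : σ →₀ ℕ) : deg (s • a) = s * deg a := map_nsmul Finsupp.degree s a

theorem deg_mono {a b : σ →₀ ℕ} (h : a ≤ b) : deg a ≤ deg b := Finsupp.degree_mono h

theorem deg_tsub_add {a b : σ →₀ ℕ} (h : a ≤ b) : deg (b - a) + deg a = deg b := by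
  rw [← deg_add, tsub_add_cancel_of_le h]

end Degree

section Monomial

variable {k : Type*} [Field k] {σ : Type*}

theorem mon_add (a b : σ →₀ ℕ) : mon k (a + b) = mon k a * mon k b := by
  simp only [mon, monomial_mul, mul_one]

theorem X_eq_mon (i : σ) : (X i : MvPolynomial σ k) = mon k (single i 1) := rfl

theorem mon_add_mem_mul {I J : Ideal (MvPolynomial σ k)} {a b : σ →₀ ℕ} (ha : mon k a ∈ I)
    (hb : mon k b ∈ J) : mon k (a + b) ∈ I * J :=
  mon_add (k := k) a b ▸ Ideal.mul_mem_mul ha hb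

theorem mon_nsmul_mem_pow {I : Ideal (MvPolynomial σ k)} {a : σ →₀ ℕ} (ha : mon k a ∈ I) (s : ℕ) :
    mon k (s • a) ∈ I ^ s := by
  simpa only [mon, monomial_pow, one_pow] using Ideal.pow_mem_pow ha s

theorem span_mon_deg_ge_mul_le (A B : ℕ) :
    Ideal.span (mon k '' {a : σ →₀ ℕ | A ≤ deg a}) * Ideal.span (mon k '' {a | B ≤ deg a}) ≤
      Ideal.span (mon k '' {a | A + B ≤ deg a}) := by
  rw [Ideal.span_mul_span']
  refine Ideal.span_mono ?_
  rintro _ ⟨_, ⟨a, ha, rfl⟩, _, ⟨b, hb, rfl⟩, rfl⟩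
  exact ⟨a + b, (deg_add a b).ge.trans' (add_le_add ha hb), mon_add a b⟩

theorem mon_notMem_span_mon_deg_ge {a : σ →₀ ℕ} {N : ℕ} (h : deg a < N) :
    mon k a ∉ Ideal.span (mon k '' {b | N ≤ deg b}) := by
  intro hmem
  obtain ⟨b, hb, hba⟩ := mem_ideal_span_monomial_image.mp hmem a (by classical simp [mon])
  exact absurd (hb.trans (deg_mono hba)) h.not_ge

end Monomial

section LexOrder

variable {n : ℕ}

theorem lexLt_of_isBot {a b : Fin n →₀ ℕ} {i : Fin n} (hi : IsBot i) (h : a i < b i) :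
    lexLt a b :=
  Finsupp.Lex.lt_iff.mpr ⟨i, fun j hj => absurd (hi j) hj.not_ge, h⟩

theorem lexLe_add_single_of_le (a : Fin n →₀ ℕ) {i j : Fin n} (h : i ≤ j) :
    lexLe (a + single j 1) (a + single i 1) :=
  add_le_add_right (Finsupp.Lex.single_le_iff.mpr h) (toLex a)

end LexOrder

section LexIdeal

variable {k : Type*} [Field k] {n d : ℕ} {u v : Fin n →₀ ℕ}

theorem mon_mem_lexIdeal {a : Fin n →₀ ℕ} (h : a ∈ lexSeg d u v) : mon k a ∈ lexIdeal k d u v :=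
  Ideal.subset_span ⟨a, h, rfl⟩

theorem lexIdeal_pow_le_span_mon_deg_ge (t : ℕ) :
    lexIdeal k d u v ^ t ≤ Ideal.span (mon k '' {a | t * d ≤ deg a}) := by
  induction t with
  | zero =>
    rw [pow_zero, Ideal.one_eq_top, top_le_iff, Ideal.eq_top_iff_one]
    exact Ideal.subset_span ⟨0, (zero_mul d).trans_le (Nat.zero_le _), one_def.symm⟩
  | succ t ih =>
    rw [pow_succ, Nat.succ_mul]
    refine (Ideal.mul_mono ih ?_).trans (span_mon_deg_ge_mul_le _ _)
    exact Ideal.span_mono (Set.image_mono fun a ha => ha.1.ge)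

theorem mon_notMem_lexIdeal_pow {a : Fin n →₀ ℕ} {t : ℕ} (h : deg a < t * d) :
    mon k a ∉ lexIdeal k d u v ^ t :=
  fun hmem => mon_notMem_span_mon_deg_ge h (lexIdeal_pow_le_span_mon_deg_ge t hmem)

end LexIdeal

section Socle

variable {k : Type*} [Field k] {n d : ℕ} {u v : Fin n →₀ ℕ} {i₀ i₁ : Fin n}

theorem single_pred_add_single_mem_lexSeg {i iₙ : Fin n} (hd : 1 ≤ d) (hi₀ : IsBot i₀)
    (hu₀ : 0 < u i₀) (h₁₀ : i₁ ≠ i₀) (hi : i ≠ i₀) (hiₙ : i ≤ iₙ)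
    (hv : lexLe v (single i₁ (d - 1) + single iₙ 1)) :
    single i₁ (d - 1) + single i 1 ∈ lexSeg d u v := by
  refine ⟨?_, hv.trans (lexLe_add_single_of_le _ hiₙ), (lexLt_of_isBot hi₀ ?_).le⟩
  · rw [deg_add, deg_single, deg_single, Nat.sub_add_cancel hd]
  · simpa only [Finsupp.add_apply, Finsupp.single_eq_of_ne' h₁₀, Finsupp.single_eq_of_ne' hi,
      add_zero] using hu₀

theorem add_single_tsub_single_mem_lexSeg (hu : deg u = d) (hi₀ : IsBot i₀) (hu₀ : 0 < u i₀)
    (h₁₀ : i₁ ≠ i₀) (hv : lexLe v (u + single i₁ 1 - single i₀ 1)) :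
    u + single i₁ 1 - single i₀ 1 ∈ lexSeg d u v := by
  have hle : single i₀ 1 ≤ u + single i₁ 1 :=
    Finsupp.single_le_iff.mpr (hu₀.trans_le le_self_add)
  refine ⟨?_, hv, (lexLt_of_isBot hi₀ ?_).le⟩
  · have := deg_tsub_add hle
    rw [deg_add, deg_single, deg_single, hu] at this
    omega
  · simp only [Finsupp.tsub_apply, Finsupp.add_apply, Finsupp.single_eq_same,
      Finsupp.single_eq_of_ne' h₁₀]
    omega

theorem socle_exponent_eq (hle : single i₀ 1 ≤ u) (s : ℕ) :
    single i₁ d + (s + 1) • u - single i₀ 1 = single i₁ d + s • u + (u - single i₀ 1) := by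
  obtain ⟨w, rfl⟩ := exists_add_of_le hle
  rw [add_tsub_cancel_left]
  refine tsub_eq_of_eq_add ?_
  rw [succ_nsmul]
  abel

theorem single_add_socle_exponent (hd : 1 ≤ d) (hle : single i₀ 1 ≤ u) (s : ℕ) (i : Fin n) :
    single i 1 + (single i₁ d + (s + 1) • u - single i₀ 1) =
      (single i₁ (d - 1) + single i 1) + ((u + single i₁ 1 - single i₀ 1) + s • u) := by
  rw [socle_exponent_eq hle, ← tsub_add_eq_add_tsub hle,
    ← Nat.sub_add_cancel hd, Finsupp.single_add, Nat.add_sub_cancel]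
  ac_rfl

theorem mon_socle_notMem_lexIdeal_pow (hu : deg u = d) (hu₀ : 0 < u i₀) {t : ℕ} (ht : 2 ≤ t) :
    mon k (single i₁ d + (t - 1) • u - single i₀ 1) ∉ lexIdeal k d u v ^ t := by
  obtain ⟨s, rfl⟩ : ∃ s, t = s + 2 := ⟨t - 2, by omega⟩
  have hle : single i₀ 1 ≤ u := Finsupp.single_le_iff.mpr hu₀
  refine mon_notMem_lexIdeal_pow ?_
  rw [show s + 2 - 1 = s + 1 from rfl, socle_exponent_eq hle, deg_add, deg_add, deg_nsmul,
    deg_single]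
  have := deg_tsub_add hle
  rw [deg_single, hu] at this
  rw [hu]
  linarith

theorem X_mul_mon_socle_mem_lexIdeal_pow {iₙ : Fin n} (hu : deg u = d) (huv : lexLe v u)
    (hi₀ : IsBot i₀) (hu₀ : 0 < u i₀) (h₁₀ : i₁ ≠ i₀) (hiₙ : IsTop iₙ)
    (hv₁ : lexLe v (u + single i₁ 1 - single i₀ 1))
    (hv₂ : lexLe v (single i₁ (d - 1) + single iₙ 1)) {t : ℕ} (ht : 2 ≤ t) (i : Fin n) :
    X i * mon k (single i₁ d + (t - 1) • u - single i₀ 1) ∈ lexIdeal k d u v ^ t := by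
  obtain ⟨s, rfl⟩ : ∃ s, t = s + 2 := ⟨t - 2, by omega⟩
  have hd : 1 ≤ d := hu ▸ hu₀.trans_le (Finsupp.le_degree i₀ u)
  have hle : single i₀ 1 ≤ u := Finsupp.single_le_iff.mpr hu₀
  have hU : mon k u ∈ lexIdeal k d u v := mon_mem_lexIdeal ⟨hu, huv, le_rfl⟩
  rw [X_eq_mon, ← mon_add, show s + 2 - 1 = s + 1 from rfl, pow_succ']
  by_cases hi : i = i₀
  · subst hi
    have hx₁ : mon k (single i₁ d) ∈ lexIdeal k d u v := by
      have := single_pred_add_single_mem_lexSeg hd hi₀ hu₀ h₁₀ h₁₀ (hiₙ i₁) hv₂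
      rw [← Finsupp.single_add, Nat.sub_add_cancel hd] at this
      exact mon_mem_lexIdeal this
    rw [add_tsub_cancel_of_le (hle.trans (le_add_left (succ_nsmul u s ▸ le_add_self)))]
    exact mon_add_mem_mul hx₁ (mon_nsmul_mem_pow hU _)
  · rw [single_add_socle_exponent hd hle, pow_succ']
    exact mon_add_mem_mul
      (mon_mem_lexIdeal (single_pred_add_single_mem_lexSeg hd hi₀ hu₀ h₁₀ hi (hiₙ i) hv₂))
      (mon_add_mem_mul (mon_mem_lexIdeal (add_single_tsub_single_mem_lexSeg hu hi₀ hu₀ h₁₀ hv₁))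
        (mon_nsmul_mem_pow hU s))

end Socle

section Depth

variable {k : Type*} [Field k] {n : ℕ} {I : Ideal (MvPolynomial (Fin n) k)}
  {m : MvPolynomial (Fin n) k}

theorem mul_mem_of_mem_mMax (hXm : ∀ i, X i * m ∈ I) {x : MvPolynomial (Fin n) k}
    (hx : x ∈ mMax k n) : x * m ∈ I := by
  have : mMax k n ≤ I.colon (Ideal.span {m}) :=
    Ideal.span_le.mpr <| Set.range_subset_iff.mpr fun i =>
      Submodule.mem_colon_span_singleton.mpr (hXm i)
  exact Submodule.mem_colon_span_singleton.mp (this hx)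

theorem eq_nil_of_isRegular (hm : m ∉ I) (hXm : ∀ i, X i * m ∈ I)
    {rs : List (MvPolynomial (Fin n) k)} (hrs : ∀ x ∈ rs, x ∈ mMax k n)
    (hreg : RingTheory.Sequence.IsRegular (MvPolynomial (Fin n) k ⧸ I) rs) : rs = [] := by
  cases rs with
  | nil => rfl
  | cons x rs =>
    have hx : IsSMulRegular (MvPolynomial (Fin n) k ⧸ I) x :=
      ((RingTheory.Sequence.isWeaklyRegular_cons_iff _ x rs).mp hreg.toIsWeaklyRegular).1
    refine absurd ((Submodule.Quotient.mk_eq_zero I).mp (hx ?_)) hm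
    change x • _ = x • 0
    rw [smul_zero, ← Submodule.Quotient.mk_smul, smul_eq_mul]
    exact (Submodule.Quotient.mk_eq_zero I).mpr (mul_mem_of_mem_mMax hXm (hrs x (by simp)))

theorem quotDepth_eq_zero (hm : m ∉ I) (hXm : ∀ i, X i * m ∈ I) : quotDepth k I = 0 :=
  Nat.le_zero.mp <| csSup_le' fun _ ⟨_, hlen, hrs, hreg⟩ => by
    rw [← hlen, eq_nil_of_isRegular hm hXm hrs hreg, List.length_nil]

end Depth

theorem statement11 {k : Type*} [Field k] {n d : ℕ} (hn : 2 ≤ n)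
    (u v : Fin n →₀ ℕ) (hu : deg u = d) (huv : lexLe v u)
    (hnu1 : u (⟨0, by omega⟩ : Fin n) = 1)
    (hvle : lexLe v (u + Finsupp.single (⟨1, by omega⟩ : Fin n) 1 - Finsupp.single (⟨0, by omega⟩ : Fin n) 1))
    (hvle2 : lexLe v (Finsupp.single (⟨1, by omega⟩ : Fin n) (d-1) + Finsupp.single (⟨n-1, by omega⟩ : Fin n) 1))
    (t : ℕ) (ht : 2 ≤ t) :
    mon k (Finsupp.single (⟨1, by omega⟩ : Fin n) d + (t-1) • u - Finsupp.single (⟨0, by omega⟩ : Fin n) 1) ∉ (lexIdeal k d u v) ^ t ∧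
    (∀ i : Fin n, X i * mon k (Finsupp.single (⟨1, by omega⟩ : Fin n) d + (t-1) • u - Finsupp.single (⟨0, by omega⟩ : Fin n) 1)
        ∈ (lexIdeal k d u v) ^ t) ∧
    quotDepth k ((lexIdeal k d u v) ^ t) = 0 := by
  have hi₀ : IsBot (⟨0, by omega⟩ : Fin n) := fun j => Fin.mk_le_mk.mpr j.val.zero_le
  have hiₙ : IsTop (⟨n - 1, by omega⟩ : Fin n) := fun j => Fin.mk_le_mk.mpr (by omega)
  have h₁₀ : (⟨1, by omega⟩ : Fin n) ≠ ⟨0, by omega⟩ := by simp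
  have hu₀ : 0 < u ⟨0, by omega⟩ := hnu1 ▸ one_pos
  have hnotMem :=
    mon_socle_notMem_lexIdeal_pow (k := k) (v := v) (i₁ := ⟨1, by omega⟩) hu hu₀ ht
  have hXmem := X_mul_mon_socle_mem_lexIdeal_pow (k := k) hu huv hi₀ hu₀ h₁₀ hiₙ hvle hvle2 ht
  exact ⟨hnotMem, hXmem, quotDepth_eq_zero hnotMem hXmem⟩

end LexPaper
end
end
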